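/- On ℝ⁵ with coordinates (x,y,z,a,b), let Z₁ = ∂x + a∂z, Z₂ = ∂y + b∂z, Z₃ = −3∂b, Z₄ = ∂a, and define the landing-mode control fields Y₁ = Z₃, Y₂ = Z₄, Y₃ = 3abZ₁ − 3(1+a²)Z₂ + Z₃, Y₄ = (1+b²)Z₁ − abZ₂ + Z₄. Then the family {Y₁, Y₂, Y₃, Y₄} is bracket generating at every point of ℝ⁵: explicitly, [Y₁, Y₃] = −9a∂x + 9∂z and [Y₂, [Y₁, Y₃]] = −9∂x, and at every point p ∈ ℝ⁵ the five vectors Y₁(p), Y₂(p), Y₃(p), [Y₁,Y₃](p), [Y₂,[Y₁,Y₃]](p) span ℝ⁵. -/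

import Mathlib

noncomputable section

/-- Points of `ℝ⁵` with coordinates `(x,y,z,a,b) = (p 0, p 1, p 2, p 3, p 4)`. -/
abbrev Pt := Fin 5 → ℝ

/-- Vector fields on `ℝ⁵`. -/
abbrev VF := Pt → Pt

/-- Lie bracket of vector fields: `[V,W](p) = (DW)_p(V(p)) − (DV)_p(W(p))`. -/
def lieBracket (V W : VF) : VF := fun p => fderiv ℝ W p (V p) - fderiv ℝ V p (W p)

/-- `Z₁ = ∂x + a∂z`. -/
def Z1 : VF := fun p => ![1, 0, p 3, 0, 0]
/-- `Z₂ = ∂y + b∂z`. -/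
def Z2 : VF := fun p => ![0, 1, p 4, 0, 0]
/-- `Z₃ = −3∂b`. -/
def Z3 : VF := fun _ => ![0, 0, 0, 0, -3]
/-- `Z₄ = ∂a`. -/
def Z4 : VF := fun _ => ![0, 0, 0, 1, 0]

/-- The landing-mode control fields. -/
def Y1 : VF := Z3
def Y2 : VF := Z4
def Y3 : VF := fun p => (3 * p 3 * p 4) • Z1 p + (-3 * (1 + p 3 ^ 2)) • Z2 p + Z3 p
def Y4 : VF := fun p => (1 + p 4 ^ 2) • Z1 p + (-(p 3 * p 4)) • Z2 p + Z4 p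

/-!
`Y₁` and `Y₂` are constant, so bracketing with them differentiates along a fixed direction.
In coordinates `Y₃ = (3ab, −3(1+a²), −3b, 0, −3)` is affine in `b` and `[Y₁,Y₃]` is affine in
`a`, so each bracket is the slope of an affine function of one variable. The five vectors then
form a matrix of determinant `729(1+a²) > 0`.
-/

theorem DifferentiableAt.fderiv_apply_eq_of_affine_on_line {E F : Type*}
    [NormedAddCommGroup E] [NormedSpace ℝ E] [NormedAddCommGroup F] [NormedSpace ℝ F]
    {W : E → F} {p c : E} {w : F} (hW : DifferentiableAt ℝ W p)
    (hline : ∀ t : ℝ, W (p + t • c) = W p + t • w) :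
    fderiv ℝ W p c = w := by
  rw [← hW.lineDeriv_eq_fderiv]
  refine HasLineDerivAt.lineDeriv ?_
  simpa [HasLineDerivAt, hline] using ((hasDerivAt_id (0 : ℝ)).smul_const w).const_add (W p)

theorem lieBracket_const_left (c : Pt) (W : VF) (p : Pt) :
    lieBracket (fun _ => c) W p = fderiv ℝ W p c := by
  simp [lieBracket]

theorem span_range_eq_top_of_isUnit_det {R ι : Type*} [CommRing R] [Fintype ι]
    [DecidableEq ι] {v : ι → ι → R} (hv : IsUnit (Matrix.of v).det) :
    Submodule.span R (Set.range v) = ⊤ :=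
  ((Pi.basisFun R ι).is_basis_iff_det.2 (by rwa [Pi.basisFun_det_apply])).2

theorem Y3_apply (p : Pt) : Y3 p = ![3 * p 3 * p 4, -3 * (1 + p 3 ^ 2), -3 * p 4, 0, -3] := by
  ext i
  fin_cases i <;> simp [Y3, Z1, Z2, Z3]
  ring

theorem differentiable_Y3 : Differentiable ℝ Y3 := by
  simp only [differentiable_pi, funext Y3_apply]
  intro i
  fin_cases i <;> simp <;> fun_prop

theorem lieBracket_Y1_Y3 : lieBracket Y1 Y3 = fun p => ![-9 * p 3, 0, 9, 0, 0] := by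
  funext p
  have hline : ∀ t : ℝ,
      Y3 (p + t • ![0, 0, 0, 0, -3]) = Y3 p + t • ![-9 * p 3, 0, 9, 0, 0] := by
    intro t
    ext i
    fin_cases i <;> simp [Y3_apply, Matrix.vecHead, Matrix.vecTail] <;> ring
  exact (lieBracket_const_left _ Y3 p).trans
    ((differentiable_Y3 p).fderiv_apply_eq_of_affine_on_line hline)

theorem lieBracket_Y2_lieBracket_Y1_Y3 :
    lieBracket Y2 (lieBracket Y1 Y3) = fun _ => ![-9, 0, 0, 0, 0] := by
  funext p
  have hdiff : Differentiable ℝ (lieBracket Y1 Y3) := by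
    simp only [differentiable_pi, lieBracket_Y1_Y3]
    intro i
    fin_cases i <;> simp
    fun_prop
  have hline : ∀ t : ℝ, lieBracket Y1 Y3 (p + t • ![0, 0, 0, 1, 0]) =
      lieBracket Y1 Y3 p + t • ![-9, 0, 0, 0, 0] := by
    intro t
    ext i
    fin_cases i <;> simp [lieBracket_Y1_Y3, Matrix.vecHead, Matrix.vecTail]
    ring
  exact (lieBracket_const_left _ _ p).trans ((hdiff p).fderiv_apply_eq_of_affine_on_line hline)

/-- The landing-mode control fields `Y₁ = Z₃`, `Y₂ = Z₄`, `Y₃ = 3abZ₁ − 3(1+a²)Z₂ + Z₃`,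
`Y₄ = (1+b²)Z₁ − abZ₂ + Z₄` are bracket generating at every point of `ℝ⁵`:
`[Y₁,Y₃] = −9a∂x + 9∂z`, `[Y₂,[Y₁,Y₃]] = −9∂x`, and at every point the vectors
`Y₁, Y₂, Y₃, [Y₁,Y₃], [Y₂,[Y₁,Y₃]]` span `ℝ⁵`. -/
theorem landing_mode_bracket_generating :
    lieBracket Y1 Y3 = (fun p => ![-9 * p 3, 0, 9, 0, 0]) ∧
    lieBracket Y2 (lieBracket Y1 Y3) = (fun _ => ![-9, 0, 0, 0, 0]) ∧
    (∀ p : Pt,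
      Submodule.span ℝ
        ({Y1 p, Y2 p, Y3 p, lieBracket Y1 Y3 p, lieBracket Y2 (lieBracket Y1 Y3) p} :
          Set (Fin 5 → ℝ)) = ⊤) := by
  refine ⟨lieBracket_Y1_Y3, lieBracket_Y2_lieBracket_Y1_Y3, fun p => ?_⟩
  rw [lieBracket_Y2_lieBracket_Y1_Y3, lieBracket_Y1_Y3]
  set frame : Fin 5 → Pt := ![Y1 p, Y2 p, Y3 p, ![-9 * p 3, 0, 9, 0, 0], ![-9, 0, 0, 0, 0]]
  have hdet : (Matrix.of frame).det = 729 * (1 + p 3 ^ 2) := by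
    simp [frame, Matrix.det_succ_row_zero, Fin.sum_univ_succ, Fin.succAbove, Y1, Y2, Z3, Z4,
      Y3_apply]
    ring
  have hunit : IsUnit (Matrix.of frame).det := by
    rw [hdet, isUnit_iff_ne_zero]
    positivity
  have hrange :
      Set.range frame = {Y1 p, Y2 p, Y3 p, ![-9 * p 3, 0, 9, 0, 0], ![-9, 0, 0, 0, 0]} := by
    simp only [frame, Matrix.range_cons, Matrix.range_empty, Set.union_empty, Set.singleton_union]
  rw [← hrange]
  exact span_range_eq_top_of_isUnit_det hunit
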